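/- Let β > 0, S > 0, X₁', X₂' ∈ ℝ and let C : ℝ → ℝ be twice continuously differentiable. Define M : ℝ × ℝ × (0,∞) → ℂ by M(X₁,X₂,Z) = (β/(2πZ)) · exp{ iβ[(X₁−X₁')² − (X₂−X₂')²]/(2Z) − (2Z/S)·∫₀¹ C((X₁−X₂)·s + (X₁'−X₂')·(1−s)) ds }. Then for all X₁, X₂ ∈ ℝ and Z > 0, M satisfies the second-moment equation ∂_Z M = (i/(2β))·(∂²_{X₁} M − ∂²_{X₂} M) − (2/S)·C(X₁−X₂)·M. -/

import Mathlib

open Real Complex MeasureTheory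

/-! Write `v = X₁' - X₂'`, `G u = ∫₀¹ C(u s + v (1 - s)) ds` and
`φ = iβ[(X₁ - X₁')² - (X₂ - X₂')²]/(2Z) - (2Z/S) G(X₁ - X₂)`, so that `M = β/(2πZ) · exp φ`.
Every derivative of `M` is `M` times a polynomial in the partial derivatives of `φ`. In
`∂²_{X₁} M - ∂²_{X₂} M` the terms with `G''` cancel, and the rest matches
`∂_Z M + (2/S) C(X₁ - X₂) M` because `(u - v) G u = ∫_v^u C`, whence `C u = G u + (u - v) G' u`. -/

theorem hasDerivAt_intervalIntegral_of_continuous_deriv {E : Type*} [NormedAddCommGroup E]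
    [NormedSpace ℝ E] {F F' : ℝ → ℝ → E} {a b : ℝ} (hF : ∀ x, Continuous (F x))
    (hF' : Continuous (Function.uncurry F')) (hderiv : ∀ x t, HasDerivAt (F · t) (F' x t) x)
    (x₀ : ℝ) : HasDerivAt (fun x => ∫ t in a..b, F x t) (∫ t in a..b, F' x₀ t) x₀ := by
  obtain ⟨B, hB⟩ := ((isCompact_closedBall x₀ 1).prod isCompact_uIcc).exists_bound_of_continuousOn
    hF'.continuousOn
  exact (intervalIntegral.hasDerivAt_integral_of_dominated_loc_of_deriv_le (bound := fun _ => B)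
    (Metric.closedBall_mem_nhds x₀ one_pos) (.of_forall fun x => (hF x).aestronglyMeasurable)
    ((hF x₀).intervalIntegrable a b)
    (hF'.comp (Continuous.prodMk_right x₀)).aestronglyMeasurable
    (.of_forall fun t ht x hx => hB (x, t) ⟨hx, Set.uIoc_subset_uIcc ht⟩)
    intervalIntegrable_const (.of_forall fun t _ x _ => hderiv x t)).2

theorem hasDerivAt_integral_mul_comp_segment {f f' w : ℝ → ℝ}
    (hf : ∀ x, HasDerivAt f (f' x) x) (hf' : Continuous f') (hw : Continuous w) (v u : ℝ) :
    HasDerivAt (fun x => ∫ s in (0:ℝ)..1, w s * f (x * s + v * (1 - s)))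
      (∫ s in (0:ℝ)..1, w s * (s * f' (u * s + v * (1 - s)))) u := by
  have hfc : Continuous f := continuous_iff_continuousAt.2 fun x => (hf x).continuousAt
  refine hasDerivAt_intervalIntegral_of_continuous_deriv
    (F' := fun x s => w s * (s * f' (x * s + v * (1 - s)))) (fun x => by fun_prop)
    (by simp only [Function.uncurry_def]; fun_prop) (fun x s => ?_) u
  have hlin : HasDerivAt (fun x => x * s + v * (1 - s)) s x := by
    simpa using ((hasDerivAt_id x).mul_const s).add_const (v * (1 - s))
  simpa [mul_comm s] using ((hf _).comp x hlin).const_mul (w s)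

noncomputable def segmentMean (f : ℝ → ℝ) (v u : ℝ) : ℝ := ∫ s in (0:ℝ)..1, f (u * s + v * (1 - s))

theorem hasDerivAt_segmentMean {f : ℝ → ℝ} (hf : ContDiff ℝ 1 f) (v u : ℝ) :
    HasDerivAt (segmentMean f v) (∫ s in (0:ℝ)..1, s * deriv f (u * s + v * (1 - s))) u := by
  have h := hasDerivAt_integral_mul_comp_segment
    (fun x => (hf.differentiable one_ne_zero x).hasDerivAt) (hf.continuous_deriv le_rfl)
    (w := fun _ => 1) continuous_const v u
  simp only [one_mul] at h
  exact h

theorem differentiable_deriv_segmentMean {f : ℝ → ℝ} (hf : ContDiff ℝ 2 f) (v : ℝ) :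
    Differentiable ℝ (deriv (segmentMean f v)) := by
  have hf' : ContDiff ℝ 1 (deriv f) := hf.deriv'
  rw [funext fun u => (hasDerivAt_segmentMean (hf.of_le one_le_two) v u).deriv]
  exact fun u => (hasDerivAt_integral_mul_comp_segment
    (fun x => (hf'.differentiable one_ne_zero x).hasDerivAt) (hf'.continuous_deriv le_rfl)
    continuous_id v u).differentiableAt

theorem sub_mul_segmentMean (f : ℝ → ℝ) (v u : ℝ) :
    (u - v) * segmentMean f v u = ∫ t in v..u, f t := by
  have h := intervalIntegral.smul_integral_comp_mul_add (a := 0) (b := 1) f (u - v) v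
  simp only [smul_eq_mul, mul_zero, zero_add, mul_one, sub_add_cancel] at h
  rw [← h, segmentMean]
  congr 1
  exact intervalIntegral.integral_congr fun s _ => by ring_nf

theorem segmentMean_add_sub_mul_deriv {f : ℝ → ℝ} (hf : ContDiff ℝ 1 f) (v u : ℝ) :
    segmentMean f v u + (u - v) * deriv (segmentMean f v) u = f u := by
  have hprod := ((hasDerivAt_id u).sub_const v).mul
    (hasDerivAt_segmentMean hf v u).differentiableAt.hasDerivAt
  have hFTC : HasDerivAt (fun x => (x - v) * segmentMean f v x) (f u) u := by
    simpa only [sub_mul_segmentMean] using (hf.continuous.integral_hasStrictDerivAt v u).hasDerivAt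
  simpa using hprod.unique hFTC

theorem deriv_deriv_const_mul_cexp {φ φ' : ℝ → ℂ} {φ'' : ℂ} {x : ℝ} (c : ℂ)
    (hφ : ∀ t, HasDerivAt φ (φ' t) t) (hφ' : HasDerivAt φ' φ'' x) :
    deriv (deriv fun t => c * cexp (φ t)) x = c * cexp (φ x) * (φ' x ^ 2 + φ'') := by
  have hfirst (t : ℝ) : HasDerivAt (fun t => c * cexp (φ t)) (c * cexp (φ t) * φ' t) t := by
    simpa only [mul_assoc] using ((hφ t).cexp.const_mul c)
  rw [funext fun t => (hfirst t).deriv, ((hfirst x).fun_mul hφ').deriv]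
  ring

theorem hasDerivAt_div_mul_cexp {φ : ℝ → ℂ} {φ' : ℂ} {z : ℝ} (c : ℂ) (hz : z ≠ 0)
    (hφ : HasDerivAt φ φ' z) :
    HasDerivAt (fun t : ℝ => c / t * cexp (φ t)) (c / z * cexp (φ z) * (φ' - 1 / z)) z := by
  have hinv : HasDerivAt (fun t : ℝ => c / t) (-(c / z) / z) z := by
    simpa [div_eq_mul_inv, neg_div, pow_two, mul_assoc] using
      ((hasDerivAt_inv (ofReal_ne_zero.2 hz)).comp_ofReal).const_mul c
  refine (hinv.fun_mul hφ.cexp).congr_deriv ?_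
  ring

noncomputable def phase (β S a b : ℝ) (G : ℝ → ℝ) (x y z : ℝ) : ℂ :=
  I * β * (((x : ℂ) - a) ^ 2 - ((y : ℂ) - b) ^ 2) / (2 * z) - 2 * z / S * (G (x - y) : ℂ)

section phase
variable {β S a b : ℝ} {G : ℝ → ℝ}

theorem hasDerivAt_phase_fst (hG : Differentiable ℝ G) (x y z : ℝ) :
    HasDerivAt (phase β S a b G · y z)
      (I * β * (x - a) / z - 2 * z / S * ((deriv G (x - y) : ℝ) : ℂ)) x := by
  have hsq : HasDerivAt (fun t : ℝ => ((t : ℂ) - a) ^ 2) (2 * ((x : ℂ) - a)) x := by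
    simpa using (((hasDerivAt_id (x : ℂ)).sub_const (a : ℂ)).pow 2).comp_ofReal
  have hG' : HasDerivAt (fun t => (G (t - y) : ℂ)) ((deriv G (x - y) : ℝ) : ℂ) x := by
    simpa using ((hG _).hasDerivAt.comp x ((hasDerivAt_id x).sub_const y)).ofReal_comp
  refine ((((hsq.sub_const _).const_mul (I * β)).div_const (2 * z)).fun_sub
    (hG'.const_mul (2 * (z : ℂ) / S))).congr_deriv ?_
  ring

theorem hasDerivAt_phase_snd (hG : Differentiable ℝ G) (x y z : ℝ) :
    HasDerivAt (phase β S a b G x · z)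
      (-(I * β * (y - b)) / z + 2 * z / S * ((deriv G (x - y) : ℝ) : ℂ)) y := by
  have hsq : HasDerivAt (fun t : ℝ => ((t : ℂ) - b) ^ 2) (2 * ((y : ℂ) - b)) y := by
    simpa using (((hasDerivAt_id (y : ℂ)).sub_const (b : ℂ)).pow 2).comp_ofReal
  have hG' : HasDerivAt (fun t => (G (x - t) : ℂ)) (-deriv G (x - y) : ℝ) y := by
    simpa using ((hG _).hasDerivAt.comp y ((hasDerivAt_id y).const_sub x)).ofReal_comp
  refine ((((hsq.const_sub _).const_mul (I * β)).div_const (2 * z)).fun_sub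
    (hG'.const_mul (2 * (z : ℂ) / S))).congr_deriv ?_
  push_cast
  ring

theorem hasDerivAt_phase_thd (x y : ℝ) {z : ℝ} (hz : z ≠ 0) :
    HasDerivAt (phase β S a b G x y ·)
      (-(I * β * (((x : ℂ) - a) ^ 2 - ((y : ℂ) - b) ^ 2)) / (2 * z ^ 2)
        - 2 / S * (G (x - y) : ℂ)) z := by
  have hcoe : HasDerivAt (fun t : ℝ => (t : ℂ)) 1 z := (hasDerivAt_id (z : ℂ)).comp_ofReal
  have hz' : (2 * z : ℂ) ≠ 0 := by exact_mod_cast mul_ne_zero two_ne_zero hz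
  refine ((hasDerivAt_const z (I * β * (((x : ℂ) - a) ^ 2 - ((y : ℂ) - b) ^ 2))).fun_div
    (hcoe.const_mul 2) hz').fun_sub (((hcoe.const_mul 2).div_const (S : ℂ)).mul_const
    (G (x - y) : ℂ)) |>.congr_deriv ?_
  field_simp
  ring

theorem hasDerivAt_phase_fst_fst (hG : Differentiable ℝ (deriv G)) (x y z : ℝ) :
    HasDerivAt (fun t : ℝ => I * β * (t - a) / z - 2 * z / S * ((deriv G (t - y) : ℝ) : ℂ))
      (I * β / z - 2 * z / S * ((deriv (deriv G) (x - y) : ℝ) : ℂ)) x := by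
  have hG' := ((hG _).hasDerivAt.comp x ((hasDerivAt_id x).sub_const y)).ofReal_comp
  refine ((((hasDerivAt_id (x : ℂ)).comp_ofReal.sub_const (a : ℂ)).const_mul (I * β)).div_const
    (z : ℂ)).fun_sub (hG'.const_mul (2 * (z : ℂ) / S)) |>.congr_deriv ?_
  simp

theorem hasDerivAt_phase_snd_snd (hG : Differentiable ℝ (deriv G)) (x y z : ℝ) :
    HasDerivAt (fun t : ℝ => -(I * β * (t - b)) / z + 2 * z / S * ((deriv G (x - t) : ℝ) : ℂ))
      (-(I * β) / z - 2 * z / S * ((deriv (deriv G) (x - y) : ℝ) : ℂ)) y := by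
  have hG' := ((hG _).hasDerivAt.comp y ((hasDerivAt_id y).const_sub x)).ofReal_comp
  refine ((((hasDerivAt_id (y : ℂ)).comp_ofReal.sub_const (b : ℂ)).const_mul
    (I * β)).neg.div_const (z : ℂ)).fun_add (hG'.const_mul (2 * (z : ℂ) / S)) |>.congr_deriv ?_
  simp only [mul_one, id_eq, mul_neg, ofReal_neg]
  ring

end phase

theorem second_moment_formula_solves_moment_equation_general
    (β S X₁' X₂' : ℝ) (hβ : 0 < β)
    (C : ℝ → ℝ) (hC : ContDiff ℝ 2 C)
    (M : ℝ → ℝ → ℝ → ℂ)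
    (hM : ∀ X₁ X₂ Z : ℝ, M X₁ X₂ Z =
      ((β : ℂ) / (2 * (π : ℂ) * (Z : ℂ))) *
        Complex.exp
          (Complex.I * (β : ℂ) * (((X₁ : ℂ) - (X₁' : ℂ)) ^ 2 - ((X₂ : ℂ) - (X₂' : ℂ)) ^ 2)
              / (2 * (Z : ℂ))
            - (2 * (Z : ℂ) / (S : ℂ)) *
              ((∫ s in (0:ℝ)..1, C ((X₁ - X₂) * s + (X₁' - X₂') * (1 - s)) : ℝ) : ℂ))) :
    ∀ X₁ X₂ Z : ℝ, 0 < Z →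
      deriv (fun z : ℝ => M X₁ X₂ z) Z =
        (Complex.I / (2 * (β : ℂ))) *
            (deriv (deriv (fun x : ℝ => M x X₂ Z)) X₁
              - deriv (deriv (fun x : ℝ => M X₁ x Z)) X₂)
          - (2 / (S : ℂ)) * ((C (X₁ - X₂) : ℝ) : ℂ) * M X₁ X₂ Z := by
  intro X₁ X₂ Z hZ
  have hC1 : ContDiff ℝ 1 C := hC.of_le one_le_two
  have hCG : (C (X₁ - X₂) : ℂ) = segmentMean C (X₁' - X₂') (X₁ - X₂)
      + ((X₁ - X₁') - (X₂ - X₂')) * deriv (segmentMean C (X₁' - X₂')) (X₁ - X₂) := by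
    rw [← segmentMean_add_sub_mul_deriv hC1 (X₁' - X₂') (X₁ - X₂)]
    push_cast
    ring
  set G := segmentMean C (X₁' - X₂')
  have hG : Differentiable ℝ G := fun u => (hasDerivAt_segmentMean hC1 _ u).differentiableAt
  have hG' : Differentiable ℝ (deriv G) := differentiable_deriv_segmentMean hC _
  have hM' (x y z : ℝ) : M x y z = β / (2 * π) / z * cexp (phase β S X₁' X₂' G x y z) := by
    rw [hM, div_mul_eq_div_div]; rfl
  simp only [hM']
  rw [deriv_deriv_const_mul_cexp _ (hasDerivAt_phase_fst hG · X₂ Z)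
      (hasDerivAt_phase_fst_fst hG' X₁ X₂ Z),
    deriv_deriv_const_mul_cexp _ (hasDerivAt_phase_snd hG X₁ · Z)
      (hasDerivAt_phase_snd_snd hG' X₁ X₂ Z),
    (hasDerivAt_div_mul_cexp _ hZ.ne' (hasDerivAt_phase_thd X₁ X₂ hZ.ne')).deriv, hCG]
  generalize β / (2 * π) / Z * cexp (phase β S X₁' X₂' G X₁ X₂ Z) = m
  have hβ' : (β : ℂ) ≠ 0 := by exact_mod_cast hβ.ne'
  have hZ' : (Z : ℂ) ≠ 0 := by exact_mod_cast hZ.ne'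
  field_simp
  linear_combination m * β * (-(I * β * ((X₁ - X₁') ^ 2 - (X₂ - X₂') ^ 2)) - 2 * Z
    + 2 ^ 2 * Z ^ 2 / S * ((deriv G (X₁ - X₂) : ℝ) : ℂ) * ((X₁ - X₁') - (X₂ - X₂'))) * I_sq

/-- The explicit single-mode second-moment formula
`M(X₁,X₂,Z) = (β/(2πZ)) exp{iβ[(X₁-X₁')² - (X₂-X₂')²]/(2Z)
  - (2Z/S) ∫₀¹ C((X₁-X₂)s + (X₁'-X₂')(1-s)) ds}`
solves the second-moment equation
`∂_Z M = (i/(2β))(∂²_{X₁} M - ∂²_{X₂} M) - (2/S) C(X₁-X₂) M`. -/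
theorem second_moment_formula_solves_moment_equation
    (β S X₁' X₂' : ℝ) (hβ : 0 < β) (hS : 0 < S)
    (C : ℝ → ℝ) (hC : ContDiff ℝ 2 C)
    (M : ℝ → ℝ → ℝ → ℂ)
    (hM : ∀ X₁ X₂ Z : ℝ, M X₁ X₂ Z =
      ((β : ℂ) / (2 * (π : ℂ) * (Z : ℂ))) *
        Complex.exp
          (Complex.I * (β : ℂ) * (((X₁ : ℂ) - (X₁' : ℂ)) ^ 2 - ((X₂ : ℂ) - (X₂' : ℂ)) ^ 2)
              / (2 * (Z : ℂ))
            - (2 * (Z : ℂ) / (S : ℂ)) *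
              ((∫ s in (0:ℝ)..1, C ((X₁ - X₂) * s + (X₁' - X₂') * (1 - s)) : ℝ) : ℂ))) :
    ∀ X₁ X₂ Z : ℝ, 0 < Z →
      deriv (fun z : ℝ => M X₁ X₂ z) Z =
        (Complex.I / (2 * (β : ℂ))) *
            (deriv (deriv (fun x : ℝ => M x X₂ Z)) X₁
              - deriv (deriv (fun x : ℝ => M X₁ x Z)) X₂)
          - (2 / (S : ℂ)) * ((C (X₁ - X₂) : ℝ) : ℂ) * M X₁ X₂ Z :=
  second_moment_formula_solves_moment_equation_general β S X₁' X₂' hβ C hC M hM
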